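/- For every θ ∈ [−π/8, π/8] and every ρ ≥ 0, with W(θ) := 4^{−1/3}·e^{iπ/6} + 2^{−2/3}·e^{−i(π+4θ)/6} and U(θ) := 4^{−1/3}·e^{5iπ/6} − 2^{−2/3}·e^{i(π−4θ)/6}, one has Re f_θ( W(θ) + ρ·e^{−iθ/3} ) ≤ Re f_θ(W(θ)) and Re f_θ( U(θ) − ρ·e^{−iθ/3} ) ≤ Re f_θ(U(θ)). That is, the maximum of Re f_θ over each infinite tail of the rotated real line beyond W(θ) (respectively beyond U(θ)) is attained at W(θ) (respectively at U(θ)). -/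
import Mathlib


open Real

/-- The phase function `f_θ(t) = e^{4iθ/3}·(i t − t⁴)`. -/
noncomputable def f (θ : ℝ) (t : ℂ) : ℂ :=
  Complex.exp (Complex.I * (4 * (θ : ℂ) / 3)) * (Complex.I * t - t ^ 4)

/-- `W(θ) = t₁ + 2^{−2/3}·e^{−i(π+4θ)/6}`. -/
noncomputable def W (θ : ℝ) : ℂ :=
  (4 : ℂ) ^ (-(1 : ℂ) / 3) * Complex.exp (Complex.I * ((π : ℂ) / 6)) +
    (2 : ℂ) ^ (-(2 : ℂ) / 3) * Complex.exp (-Complex.I * (((π : ℂ) + 4 * (θ : ℂ)) / 6))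

/-- `U(θ) = t₂ − 2^{−2/3}·e^{i(π−4θ)/6}`. -/
noncomputable def U (θ : ℝ) : ℂ :=
  (4 : ℂ) ^ (-(1 : ℂ) / 3) * Complex.exp (Complex.I * (5 * (π : ℂ) / 6)) -
    (2 : ℂ) ^ (-(2 : ℂ) / 3) * Complex.exp (Complex.I * (((π : ℂ) - 4 * (θ : ℂ)) / 6))

lemma re_f (θ u : ℝ) :
    (f θ ((u : ℂ) * Complex.exp (-Complex.I * ((θ : ℂ) / 3)))).re
      = -Real.sin θ * u - u ^ 4 := by
  have h : f θ ((u : ℂ) * Complex.exp (-Complex.I * ((θ : ℂ) / 3)))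
      = Complex.I * Complex.exp (Complex.I * (θ:ℂ)) * (u:ℂ) - (u:ℂ) ^ 4 := by
    unfold f
    rw [mul_pow, ← Complex.exp_nat_mul]
    rw [mul_sub, show (Complex.exp (Complex.I * (4 * (θ : ℂ) / 3)) *
      (Complex.I * ((u:ℂ) * Complex.exp (-Complex.I * ((θ : ℂ) / 3)))))
      = Complex.I * (Complex.exp (Complex.I * (4 * (θ : ℂ) / 3)) *
        Complex.exp (-Complex.I * ((θ : ℂ) / 3))) * (u:ℂ) by ring,
      ← Complex.exp_add,
      show Complex.exp (Complex.I * (4 * (θ : ℂ) / 3)) *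
        ((u:ℂ)^4 * Complex.exp ((4:ℕ) * (-Complex.I * ((θ : ℂ) / 3))))
      = (Complex.exp (Complex.I * (4 * (θ : ℂ) / 3)) *
        Complex.exp ((4:ℕ) * (-Complex.I * ((θ : ℂ) / 3)))) * (u:ℂ)^4 by ring,
      ← Complex.exp_add]
    rw [show Complex.I * (4 * (θ:ℂ) / 3) + -Complex.I * ((θ:ℂ) / 3) = Complex.I * (θ:ℂ) by ring,
      show Complex.I * (4 * (θ:ℂ) / 3) + (4:ℕ) * (-Complex.I * ((θ:ℂ) / 3)) = 0 by push_cast; ring,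
      Complex.exp_zero]
    ring
  rw [h, mul_comm Complex.I ((θ:ℂ))]
  simp [Complex.exp_ofReal_mul_I_re, Complex.exp_ofReal_mul_I_im, Complex.sub_re,
    Complex.mul_re, ← Complex.ofReal_pow]
lemma c4 : (4:ℂ) ^ (-(1:ℂ)/3) = (((2:ℝ)^(-(2:ℝ)/3) : ℝ) : ℂ) := by
  have h2 : ((2:ℝ):ℂ) = (2:ℂ) := by norm_num
  have h4 : (4:ℝ) ^ (-(1:ℝ)/3) = (2:ℝ)^(-(2:ℝ)/3) := by
    rw [show (4:ℝ) = (2:ℝ)^(2:ℝ) by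
      rw [show (2:ℝ) = ((2:ℕ):ℝ) by norm_num, Real.rpow_natCast]; norm_num,
      ← Real.rpow_mul (by norm_num)]
    norm_num
  rw [← h4, Complex.ofReal_cpow (by norm_num)]
  norm_num
lemma c2 : (2:ℂ) ^ (-(2:ℂ)/3) = (((2:ℝ)^(-(2:ℝ)/3) : ℝ) : ℂ) := by
  rw [Complex.ofReal_cpow (by norm_num)]
  norm_num
lemma exp_cos (x t : ℝ) :
    Complex.exp (Complex.I * ((x:ℂ) + t)) + Complex.exp (-Complex.I * ((x:ℂ) - t))
      = 2 * ((Real.cos x : ℝ) : ℂ) * Complex.exp (Complex.I * (t:ℂ)) := by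
  rw [Complex.ofReal_cos, Complex.cos]
  rw [show Complex.I * ((x:ℂ) + t) = (x:ℂ) * Complex.I + Complex.I * t by ring,
      show -Complex.I * ((x:ℂ) - t) = -((x:ℂ)) * Complex.I + Complex.I * t by ring,
      Complex.exp_add, Complex.exp_add]
  ring
lemma expNeg3 (θ : ℝ) : Complex.exp (Complex.I * ((-θ/3 : ℝ) : ℂ))
    = Complex.exp (-Complex.I * ((θ:ℂ)/3)) := by
  congr 1; push_cast; ring
lemma W_eq (θ : ℝ) : W θ =
    (((2:ℝ)^(-(2:ℝ)/3) * (2 * Real.cos (π/6 + θ/3)) : ℝ) : ℂ) *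
      Complex.exp (-Complex.I * ((θ:ℂ)/3)) := by
  unfold W
  rw [c4, c2,
    show Complex.I * ((π:ℂ)/6)
        = Complex.I * (((π/6 + θ/3 : ℝ):ℂ) + ((-θ/3 : ℝ):ℂ)) by push_cast; ring,
    show -Complex.I * (((π:ℂ) + 4*θ)/6)
        = -Complex.I * (((π/6 + θ/3 : ℝ):ℂ) - ((-θ/3 : ℝ):ℂ)) by push_cast; ring,
    ← mul_add, exp_cos, expNeg3]
  push_cast
  ring
lemma U_eq (θ : ℝ) : U θ =
    ((-((2:ℝ)^(-(2:ℝ)/3) * (2 * Real.cos (π/6 - θ/3))) : ℝ) : ℂ) *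
      Complex.exp (-Complex.I * ((θ:ℂ)/3)) := by
  unfold U
  have h := exp_cos (π/6 - θ/3) (-θ/3)
  rw [expNeg3] at h
  rw [c4, c2,
    show Complex.I * (5*(π:ℂ)/6)
        = (π:ℂ) * Complex.I + -Complex.I * (((π/6 - θ/3 : ℝ):ℂ) - ((-θ/3 : ℝ):ℂ)) by
      push_cast; ring,
    Complex.exp_add, Complex.exp_pi_mul_I,
    show Complex.I * (((π:ℂ) - 4*θ)/6)
        = Complex.I * (((π/6 - θ/3 : ℝ):ℂ) + ((-θ/3 : ℝ):ℂ)) by push_cast; ring]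
  push_cast at h ⊢
  linear_combination (-((((2:ℝ)^(-(2:ℝ)/3) : ℝ)) : ℂ)) * h
lemma ineq (s a ρ : ℝ) (hs : -1 ≤ s) (ha : 0 ≤ a) (ha3 : 1 ≤ 4 * a ^ 3) (hρ : 0 ≤ ρ) :
    -s * (a + ρ) - (a + ρ) ^ 4 ≤ -s * a - a ^ 4 := by
  nlinarith [mul_nonneg hρ (by linarith : (0:ℝ) ≤ 4 * a ^ 3 - 1),
    mul_nonneg hρ (by linarith : (0:ℝ) ≤ s + 1),
    mul_nonneg (mul_nonneg ha ha) (sq_nonneg ρ),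
    mul_nonneg ha (mul_nonneg hρ (mul_nonneg hρ hρ)),
    mul_nonneg hρ (mul_nonneg hρ (mul_nonneg hρ hρ))]
lemma cos_half (x : ℝ) (hx0 : 0 ≤ x) (hx1 : x ≤ π / 3) : 1 / 2 ≤ Real.cos x := by
  have h := Real.cos_le_cos_of_nonneg_of_le_pi hx0
    (by linarith [Real.pi_pos] : x ≤ π) (le_refl x)
  have h2 := Real.cos_le_cos_of_nonneg_of_le_pi hx0
    (by linarith [Real.pi_pos] : (π/3 : ℝ) ≤ π) hx1
  rw [Real.cos_pi_div_three] at h2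
  linarith
lemma a_facts (x : ℝ) (hx0 : 0 ≤ x) (hx1 : x ≤ π / 3) :
    0 ≤ (2:ℝ)^(-(2:ℝ)/3) * (2 * Real.cos x) ∧
      1 ≤ 4 * ((2:ℝ)^(-(2:ℝ)/3) * (2 * Real.cos x)) ^ 3 := by
  have hc : (0:ℝ) < (2:ℝ)^(-(2:ℝ)/3) := Real.rpow_pos_of_pos (by norm_num) _
  have hc3 : ((2:ℝ)^(-(2:ℝ)/3)) ^ 3 = 1/4 := by
    rw [← Real.rpow_natCast ((2:ℝ)^(-(2:ℝ)/3)) 3, ← Real.rpow_mul (by norm_num),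
      show (-(2:ℝ)/3) * (3:ℕ) = -2 by push_cast; ring, Real.rpow_neg (by norm_num),
      show (2:ℝ)^(2:ℝ) = (2:ℝ)^(2:ℕ) by rw [← Real.rpow_natCast (2:ℝ) 2]; norm_num]
    norm_num
  have hcos := cos_half x hx0 hx1
  constructor
  · positivity
  · have h8 : (1:ℝ)/8 ≤ (Real.cos x)^3 := by
      nlinarith [hcos, sq_nonneg (Real.cos x - 1/2), sq_nonneg (Real.cos x)]
    have hexp : ((2:ℝ)^(-(2:ℝ)/3) * (2 * Real.cos x)) ^ 3
        = ((2:ℝ)^(-(2:ℝ)/3)) ^ 3 * (8 * (Real.cos x)^3) := by ring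
    rw [hexp, hc3]
    linarith

/-- On each infinite tail of the rotated real line beyond `W(θ)` (resp. beyond
`U(θ)`), the maximum of `Re f_θ` is attained at `W(θ)` (resp. `U(θ)`). -/
theorem pearcey_tail_maximum_at_endpoint (θ : ℝ) (hθ : θ ∈ Set.Icc (-(π / 8)) (π / 8))
    (ρ : ℝ) (hρ : 0 ≤ ρ) :
    (f θ (W θ + (ρ : ℂ) * Complex.exp (-Complex.I * ((θ : ℂ) / 3)))).re ≤ (f θ (W θ)).re ∧
    (f θ (U θ - (ρ : ℂ) * Complex.exp (-Complex.I * ((θ : ℂ) / 3)))).re ≤ (f θ (U θ)).re := by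
  obtain ⟨h1, h2⟩ := hθ
  have hπ := Real.pi_pos
  obtain ⟨haW, ha3⟩ := a_facts (π/6 + θ/3) (by linarith) (by linarith)
  obtain ⟨hbW, hb3⟩ := a_facts (π/6 - θ/3) (by linarith) (by linarith)
  set a := (2:ℝ)^(-(2:ℝ)/3) * (2 * Real.cos (π/6 + θ/3)) with hadef
  set b := (2:ℝ)^(-(2:ℝ)/3) * (2 * Real.cos (π/6 - θ/3)) with hbdef
  have hW : W θ + (ρ : ℂ) * Complex.exp (-Complex.I * ((θ : ℂ) / 3))
      = (((a + ρ : ℝ)) : ℂ) * Complex.exp (-Complex.I * ((θ : ℂ) / 3)) := by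
    rw [W_eq, Complex.ofReal_add]; ring
  have hU : U θ - (ρ : ℂ) * Complex.exp (-Complex.I * ((θ : ℂ) / 3))
      = (((-(b + ρ) : ℝ)) : ℂ) * Complex.exp (-Complex.I * ((θ : ℂ) / 3)) := by
    rw [U_eq]; simp only [Complex.ofReal_neg, Complex.ofReal_add]; ring
  have hs1 := Real.neg_one_le_sin θ
  have hs2 := Real.sin_le_one θ
  constructor
  · rw [hW, re_f, W_eq θ, re_f]
    exact ineq (Real.sin θ) a ρ hs1 haW ha3 hρ
  · rw [hU, re_f, U_eq θ, re_f]
    have h := ineq (-Real.sin θ) b ρ (by linarith) hbW hb3 hρ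
    have e1 : (-(b + ρ)) ^ 4 = (b + ρ) ^ 4 := by ring
    have e2 : (-b) ^ 4 = b ^ 4 := by ring
    rw [e1, e2]
    nlinarith [h]
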